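/- Let P be future-directed timelike with κ := √(−η(P,P)), u a future-directed unit timelike vector, and S an antisymmetric tensor (the spin tensor S[x] at some point x). Then the centre-of-spin condition at x relative to u holds if and only if the 3-form u♭ ∧ P♭ ∧ α vanishes, where α is the covector with components α_ρ := Σ_σ (u^σ + P^σ/κ) S_{σρ}; explicitly, if and only if for all μ,ν,ρ: u_μP_να_ρ + u_νP_ρα_μ + u_ρP_μα_ν − u_μP_ρα_ν − u_νP_μα_ρ − u_ρP_να_μ = 0. -/

import Mathlib

/-!
Write `PL x S` for the dual covector −½ ε_{μνρσ} x^ν S^{ρσ} of `S` along any vector `x`, so that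
W = `PL P S` and the centre-of-spin condition reads s = `PL u S`. Since W is orthogonal to P, the
boost acts on it as W + (P/κ + u) η(u,W)/(1 − η(u,P)/κ). Contracting the Schouten identity with
u, P, S and the covector b = (u + P/κ)♭, and using η(u,u) = −1, η(P,P) = −κ², gives
  (κ − η(u,P)) (s_μ − (PL u S)_μ) = −ε_{μνρσ} u^ν P^ρ α^σ.
By the reversed Cauchy–Schwarz inequality η(u,P) < 0 < κ, so the condition is the vanishing of the
Hodge dual of u♭ ∧ P♭ ∧ α, equivalently of the 3-form itself.
-/

noncomputable section

open Finset

abbrev V4 := Fin 4 → ℝ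

/-- Sign of the Minkowski metric diag(-1,1,1,1) on the diagonal. -/
def sgn4 (μ : Fin 4) : ℝ := if μ = 0 then -1 else 1

/-- Index lowering with η = diag(-1,1,1,1): `lo v μ = v_μ`. -/
def lo (v : V4) : V4 := fun μ => sgn4 μ * v μ

/-- Minkowski bilinear form of signature (-,+,+,+). -/
def mink (v w : V4) : ℝ := ∑ μ, lo v μ * w μ

/-- Future-directed timelike vector. -/
def FDTimelike (v : V4) : Prop := mink v v < 0 ∧ 0 < v 0

/-- Future-directed unit timelike vector. -/
def FDUnit (u : V4) : Prop := mink u u = -1 ∧ 0 < u 0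

/-- κ = √(−η(P,P)). -/
def kappa (P : V4) : ℝ := Real.sqrt (-(mink P P))

/-- Spin tensor at the point x: S[x]_{μν} = J_{μν} − x_μ P_ν + x_ν P_μ. -/
def spinT (J : Fin 4 → Fin 4 → ℝ) (P x : V4) (μ ν : Fin 4) : ℝ :=
  J μ ν - lo x μ * lo P ν + lo x ν * lo P μ

/-- SSC worldline with respect to f: points where S[x]_{μν} f^ν = 0. -/
def SSCline (J : Fin 4 → Fin 4 → ℝ) (P f : V4) : Set V4 :=
  {x | ∀ μ, ∑ ν, spinT J P x μ ν * f ν = 0}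

/-- Sign of an integer, valued in ℝ. -/
def isgn (x : ℤ) : ℝ := if 0 < x then 1 else if x < 0 then -1 else 0

/-- Totally antisymmetric symbol on four indices with ε₀₁₂₃ = +1. -/
def eps4 (μ ν ρ σ : Fin 4) : ℝ :=
  isgn (((ν : ℕ) : ℤ) - ((μ : ℕ) : ℤ)) * isgn (((ρ : ℕ) : ℤ) - ((μ : ℕ) : ℤ)) *
  isgn (((σ : ℕ) : ℤ) - ((μ : ℕ) : ℤ)) * isgn (((ρ : ℕ) : ℤ) - ((ν : ℕ) : ℤ)) *
  isgn (((σ : ℕ) : ℤ) - ((ν : ℕ) : ℤ)) * isgn (((σ : ℕ) : ℤ) - ((ρ : ℕ) : ℤ))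

/-- Raising both indices of a (0,2)-tensor with the inverse metric: S^{ρσ}. -/
def raise2 (S : Fin 4 → Fin 4 → ℝ) (ρ σ : Fin 4) : ℝ := sgn4 ρ * sgn4 σ * S ρ σ

/-- The standard boost B(u) mapping P/κ to u:
B^μ_ν = δ^μ_ν + (P^μ/κ + u^μ)(P_ν/κ + u_ν)/(1 − η(u,P)/κ) − (2/κ) u^μ P_ν. -/
def boost (P u : V4) (μ ν : Fin 4) : ℝ :=
  (if μ = ν then 1 else 0)
  + (P μ / kappa P + u μ) * (lo P ν / kappa P + lo u ν) / (1 - mink u P / kappa P)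
  - (2 / kappa P) * u μ * lo P ν

/-- Lowered components of the Pauli–Lubański covector built from P and an
antisymmetric tensor S: W_μ = −(1/2) ε_{μνρσ} P^ν S^{ρσ}. -/
def PL (P : V4) (S : Fin 4 → Fin 4 → ℝ) (μ : Fin 4) : ℝ :=
  -(1/2) * ∑ ν, ∑ ρ, ∑ σ, eps4 μ ν ρ σ * P ν * raise2 S ρ σ

/-- Lowered components of the spin vector in the frame u:
s_μ = η_{μλ} (1/κ) B(u)^λ_ν W^ν. -/
def spinVec (P u : V4) (S : Fin 4 → Fin 4 → ℝ) (μ : Fin 4) : ℝ :=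
  sgn4 μ * ((1 / kappa P) * ∑ ν, boost P u μ ν * (sgn4 ν * PL P S ν))

/-- Centre-of-spin condition for the antisymmetric tensor S relative to u:
s_μ = −(1/2) ε_{μνρσ} u^ν S^{ρσ}. -/
def CentreOfSpin (P u : V4) (S : Fin 4 → Fin 4 → ℝ) : Prop :=
  ∀ μ, spinVec P u S μ = -(1/2) * ∑ ν, ∑ ρ, ∑ σ, eps4 μ ν ρ σ * u ν * raise2 S ρ σ

lemma sgn4_mul_self (μ : Fin 4) : sgn4 μ * sgn4 μ = 1 := by
  unfold sgn4; split_ifs <;> norm_num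

lemma sgn4_mul_mul_sgn4_mul (μ : Fin 4) (a b : ℝ) : sgn4 μ * a * (sgn4 μ * b) = a * b := by
  linear_combination a * b * sgn4_mul_self μ

lemma sgn4_ne_zero (μ : Fin 4) : sgn4 μ ≠ 0 := by
  unfold sgn4; split_ifs <;> norm_num

lemma lo_sgn4_mul (c : V4) : lo (fun τ => sgn4 τ * c τ) = c := by
  ext τ; simp only [lo, ← mul_assoc, sgn4_mul_self, one_mul]

lemma mink_comm (v w : V4) : mink v w = mink w v := by
  simp only [mink, lo]; congr 1; ext μ; ring

lemma kappa_pos {P : V4} (hP : mink P P < 0) : 0 < kappa P :=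
  Real.sqrt_pos.2 (neg_pos.2 hP)

lemma kappa_sq {P : V4} (hP : mink P P < 0) : kappa P ^ 2 = -mink P P :=
  Real.sq_sqrt (neg_nonneg.2 hP.le)

lemma mink_apply (v w : V4) : mink v w = -(v 0 * w 0) + v 1 * w 1 + v 2 * w 2 + v 3 * w 3 := by
  simp [mink, lo, sgn4, Fin.sum_univ_four]

lemma mink_neg_of_fdUnit_of_fdTimelike {u P : V4} (hu : FDUnit u) (hP : FDTimelike P) :
    mink u P < 0 := by
  obtain ⟨huu, hu0⟩ := hu
  obtain ⟨hPP, hP0⟩ := hP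
  rw [mink_apply] at huu hPP ⊢
  nlinarith [sq_nonneg (u 1 * P 2 - u 2 * P 1), sq_nonneg (u 1 * P 3 - u 3 * P 1),
    sq_nonneg (u 2 * P 3 - u 3 * P 2), mul_pos hu0 hP0,
    sq_nonneg (u 0 * P 0 + (u 1 * P 1 + u 2 * P 2 + u 3 * P 3))]

lemma boost_mulVec_of_orthogonal (P u w : V4) (hw : ∑ ν, lo P ν * w ν = 0) (μ : Fin 4) :
    ∑ ν, boost P u μ ν * w ν
      = w μ + (P μ / kappa P + u μ) * mink u w / (1 - mink u P / kappa P) := by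
  have expand : ∀ ν, boost P u μ ν * w ν = (if μ = ν then w ν else 0)
      + (P μ / kappa P + u μ) / (1 - mink u P / kappa P)
        * ((lo P ν * w ν) / kappa P + lo u ν * w ν)
      - 2 / kappa P * u μ * (lo P ν * w ν) := by
    intro ν; unfold boost; split_ifs <;> ring
  simp only [expand, sum_add_distrib, sum_sub_distrib, ← mul_sum, ← sum_div, sum_ite_eq,
    mem_univ, if_true, hw, mink]
  ring

lemma sum_mul_PL_self (x : V4) (S : Fin 4 → Fin 4 → ℝ) : ∑ μ, x μ * PL x S μ = 0 := by
  simp [PL, Fin.sum_univ_four, eps4, isgn]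
  ring

lemma spinVec_eq (P u : V4) (S : Fin 4 → Fin 4 → ℝ) (μ : Fin 4) :
    spinVec P u S μ = (PL P S μ + (lo u μ + lo P μ / kappa P)
      * (∑ ν, u ν * PL P S ν) / (1 - mink u P / kappa P)) / kappa P := by
  have horth : ∑ ν, lo P ν * (sgn4 ν * PL P S ν) = 0 := by
    simpa only [lo, sgn4_mul_mul_sgn4_mul] using sum_mul_PL_self P S
  have hmink : mink u (fun ν => sgn4 ν * PL P S ν) = ∑ ν, u ν * PL P S ν := by
    simp only [mink, lo, sgn4_mul_mul_sgn4_mul]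
  rw [spinVec, boost_mulVec_of_orthogonal P u _ horth, hmink]
  simp only [lo]
  linear_combination (PL P S μ / kappa P) * sgn4_mul_self μ

def eps3 (a b c : V4) (μ : Fin 4) : ℝ :=
  ∑ ν, ∑ ρ, ∑ σ, eps4 μ ν ρ σ * a ν * b ρ * c σ

/-- The Schouten identity
δ^λ_μ ε_{νρστ} = δ^λ_ν ε_{μρστ} + δ^λ_ρ ε_{νμστ} + δ^λ_σ ε_{νρμτ} + δ^λ_τ ε_{νρσμ}
(no nonzero 5-form in dimension four), contracted with b_λ y^ν x^ρ S^{στ}. -/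
lemma schouten_PL (b x y : V4) (S : Fin 4 → Fin 4 → ℝ) (hS : ∀ μ ν, S μ ν = -S ν μ)
    (μ : Fin 4) :
    -b μ * ∑ ν, y ν * PL x S ν
      = -(∑ ν, b ν * y ν) * PL x S μ + (∑ ν, b ν * x ν) * PL y S μ
        + eps3 y x (fun τ => ∑ σ, b σ * raise2 S σ τ) μ := by
  have hS' : S = fun i j => (S i j - S j i) / 2 := by
    funext i j; rw [hS i j]; ring
  rw [hS']
  fin_cases μ <;> simp [PL, eps3, Fin.sum_univ_four, eps4, isgn, raise2, sgn4] <;> ring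

lemma spinVec_sub_PL {P u : V4} {S : Fin 4 → Fin 4 → ℝ} {α : Fin 4 → ℝ}
    (hP : mink P P < 0) (hu : mink u u = -1) (huP : mink u P ≠ kappa P)
    (hS : ∀ μ ν, S μ ν = -S ν μ) (hα : ∀ ρ, α ρ = ∑ σ, (u σ + P σ / kappa P) * S σ ρ)
    (μ : Fin 4) :
    (kappa P - mink u P) * (spinVec P u S μ - PL u S μ)
      = -eps3 u P (fun τ => sgn4 τ * α τ) μ := by
  have hκ : kappa P ≠ 0 := (kappa_pos hP).ne'
  set b : V4 := fun σ => lo u σ + lo P σ / kappa P with hb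
  have hbu : ∑ σ, b σ * u σ = mink u P / kappa P - 1 := by
    calc ∑ σ, b σ * u σ = mink u u + mink P u / kappa P := by
          simp only [hb, mink, add_mul, sum_add_distrib, div_mul_eq_mul_div, sum_div]
      _ = _ := by rw [hu, mink_comm]; ring
  have hbP : ∑ σ, b σ * P σ = mink u P - kappa P := by
    calc ∑ σ, b σ * P σ = mink u P + mink P P / kappa P := by
          simp only [hb, mink, add_mul, sum_add_distrib, div_mul_eq_mul_div, sum_div]
      _ = _ := by field_simp; linear_combination kappa_sq hP
  have hbS : (fun τ => ∑ σ, b σ * raise2 S σ τ) = fun τ => sgn4 τ * α τ := by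
    funext τ
    rw [hα, mul_sum]
    refine sum_congr rfl fun σ _ => ?_
    simp only [hb, lo, raise2]
    linear_combination sgn4 τ * (u σ + P σ / kappa P) * S σ τ * sgn4_mul_self σ
  have key := schouten_PL b P u S hS μ
  rw [hbu, hbP, hbS, hb] at key
  have hd : 1 - mink u P / kappa P ≠ 0 := by
    rwa [sub_ne_zero, ne_comm, ne_eq, div_eq_one_iff_eq hκ]
  rw [spinVec_eq]
  field_simp at key ⊢
  linear_combination -key

lemma centreOfSpin_iff_eps3 {P u : V4} {S : Fin 4 → Fin 4 → ℝ} {α : Fin 4 → ℝ}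
    (hP : mink P P < 0) (hu : mink u u = -1) (huP : mink u P ≠ kappa P)
    (hS : ∀ μ ν, S μ ν = -S ν μ) (hα : ∀ ρ, α ρ = ∑ σ, (u σ + P σ / kappa P) * S σ ρ) :
    CentreOfSpin P u S ↔ ∀ μ, eps3 u P (fun τ => sgn4 τ * α τ) μ = 0 := by
  refine forall_congr' fun μ => ?_
  change spinVec P u S μ = PL u S μ ↔ _
  rw [← sub_eq_zero, ← mul_right_inj' (sub_ne_zero.2 huP.symm), mul_zero,
    spinVec_sub_PL hP hu huP hS hα, neg_eq_zero]

def wedge3 (a b c : V4) (μ ν ρ : Fin 4) : ℝ :=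
  a μ * b ν * c ρ + a ν * b ρ * c μ + a ρ * b μ * c ν
    - a μ * b ρ * c ν - a ν * b μ * c ρ - a ρ * b ν * c μ

lemma eps3_lo (a b c : V4) (μ : Fin 4) :
    eps3 (lo a) (lo b) (lo c) μ = -(sgn4 μ * eps3 a b c μ) := by
  fin_cases μ <;> simp [eps3, lo, sgn4, Fin.sum_univ_four, eps4, isgn] <;> ring

set_option maxHeartbeats 1000000 in
lemma wedge3_eq_neg_sum_eps4_mul_eps3 (a b c : V4) (μ ν ρ : Fin 4) :
    wedge3 a b c μ ν ρ = -∑ σ, eps4 μ ν ρ σ * eps3 a b c σ := by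
  fin_cases μ <;> fin_cases ν <;> fin_cases ρ <;> simp [Fin.sum_univ_four, eps4, isgn] <;>
    simp [wedge3, eps3, Fin.sum_univ_four, eps4, isgn] <;> ring

lemma sum_eps4_mul_wedge3 (a b c : V4) (μ : Fin 4) :
    ∑ ν, ∑ ρ, ∑ σ, eps4 μ ν ρ σ * wedge3 a b c ν ρ σ = 6 * eps3 a b c μ := by
  fin_cases μ <;> simp [wedge3, eps3, Fin.sum_univ_four, eps4, isgn] <;> ring

lemma forall_eps3_eq_zero_iff (a b c : V4) :
    (∀ μ, eps3 a b c μ = 0) ↔ ∀ μ ν ρ, wedge3 a b c μ ν ρ = 0 := by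
  constructor
  · intro h μ ν ρ
    simp [wedge3_eq_neg_sum_eps4_mul_eps3, h]
  · intro h μ
    simpa [h] using (sum_eps4_mul_wedge3 a b c μ).symm

theorem statement3 (P u : V4) (S : Fin 4 → Fin 4 → ℝ) (α : Fin 4 → ℝ)
    (hP : FDTimelike P) (hu : FDUnit u) (hS : ∀ μ ν, S μ ν = - S ν μ)
    (hα : ∀ ρ, α ρ = ∑ σ, (u σ + P σ / kappa P) * S σ ρ) :
    CentreOfSpin P u S ↔
      ∀ μ ν ρ, lo u μ * lo P ν * α ρ + lo u ν * lo P ρ * α μ + lo u ρ * lo P μ * α ν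
        - lo u μ * lo P ρ * α ν - lo u ν * lo P μ * α ρ - lo u ρ * lo P ν * α μ = 0 := by
  have huP : mink u P ≠ kappa P :=
    ((mink_neg_of_fdUnit_of_fdTimelike hu hP).trans (kappa_pos hP.1)).ne
  set αup : V4 := fun τ => sgn4 τ * α τ
  calc CentreOfSpin P u S ↔ ∀ μ, eps3 u P αup μ = 0 := centreOfSpin_iff_eps3 hP.1 hu.1 huP hS hα
    _ ↔ ∀ μ, eps3 (lo u) (lo P) (lo αup) μ = 0 := by
      simp only [eps3_lo, neg_eq_zero, mul_eq_zero, sgn4_ne_zero, false_or]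
    _ ↔ ∀ μ ν ρ, wedge3 (lo u) (lo P) (lo αup) μ ν ρ = 0 := forall_eps3_eq_zero_iff _ _ _
    _ ↔ _ := by rw [lo_sgn4_mul]; rfl
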